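/- arXiv:1405.5601 — 5 statements merged into one kernel-verified Lean document; each statement's English description precedes it below -/
import Mathlib

section
/- (Fooling set technique for cover automata, weak form) Let L ⊆ Σ^{≤l} be a finite language whose longest word has length l. Suppose there exists a set of pairs S = {(xᵢ, yᵢ) | 1 ≤ i ≤ n} such that xᵢyᵢ ∈ L for all i, and for all i ≠ j, if |xᵢyⱼ| ≤ l then xᵢyⱼ ∉ L. Then every NFA cover automaton for L has at least n states. -/
lemma NFA.evalFrom_append' {α σ : Type*} (M : NFA α σ) (S : Set σ) (u v : List α) :
    M.evalFrom S (u ++ v) = M.evalFrom (M.evalFrom S u) v := by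
  simp [NFA.evalFrom, List.foldl_append]

lemma NFA.evalFrom_mono {α σ : Type*} (M : NFA α σ) {S T : Set σ} (h : S ⊆ T)
    (w : List α) : M.evalFrom S w ⊆ M.evalFrom T w := by
  induction w generalizing S T with
  | nil => simpa [NFA.evalFrom]
  | cons a w ih =>
    have : M.stepSet S a ⊆ M.stepSet T a := by
      intro s hs
      rw [NFA.mem_stepSet] at hs ⊢
      obtain ⟨t, ht, hst⟩ := hs
      exact ⟨t, h ht, hst⟩
    exact ih this

lemma NFA.exists_single {α σ : Type*} (M : NFA α σ) {S : Set σ} {f : σ} (w : List α)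
    (h : f ∈ M.evalFrom S w) : ∃ s ∈ S, f ∈ M.evalFrom {s} w := by
  induction w generalizing S with
  | nil => exact ⟨f, h, rfl⟩
  | cons a w ih =>
    obtain ⟨t, ht, hft⟩ := ih h
    rw [NFA.mem_stepSet] at ht
    obtain ⟨s, hs, hts⟩ := ht
    refine ⟨s, hs, ?_⟩
    have : ({t} : Set σ) ⊆ M.stepSet {s} a := by
      intro u hu; rw [NFA.mem_stepSet]; exact ⟨s, rfl, hu ▸ hts⟩
    exact M.evalFrom_mono this w hft

/-- `A` is an NFA cover automaton for `L` with length bound `l`. -/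
def IsCoverN {α σ : Type*} (A : NFA α σ) (L : Language α) (l : ℕ) : Prop :=
  ∀ w : List α, w.length ≤ l → (w ∈ A.accepts ↔ w ∈ L)

/-- fooling set technique for cover automata, weak form:
if `(x i, y i)` is a fooling set of size `n` for the finite language `L` whose
longest word has length `l`, then every NFA cover automaton for `L` has at least
`n` states. -/
theorem cover_fooling_set_weak {α : Type*} (L : Language α) (l n : ℕ)
    (hlen : ∀ w ∈ L, List.length w ≤ l)
    (hmax : ∃ w ∈ L, List.length w = l)
    (x y : Fin n → List α)
    (hin : ∀ i, x i ++ y i ∈ L)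
    (hout : ∀ i j, i ≠ j → (x i ++ y j).length ≤ l → x i ++ y j ∉ L)
    (σ : Type*) [Fintype σ] (A : NFA α σ) (hA : IsCoverN A L l) :
    n ≤ Fintype.card σ := by
  -- each x i ++ y i is accepted
  have hacc : ∀ i, ∃ s ∈ A.evalFrom A.start (x i), ∃ f ∈ A.accept, f ∈ A.evalFrom {s} (y i) := by
    intro i
    have hm : x i ++ y i ∈ A.accepts :=
      (hA _ (hlen _ (hin i))).2 (hin i)
    rw [NFA.mem_accepts] at hm
    obtain ⟨f, hf, hfe⟩ := hm
    rw [NFA.evalFrom_append'] at hfe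
    obtain ⟨s, hs, hfs⟩ := A.exists_single _ hfe
    exact ⟨s, hs, f, hf, hfs⟩
  choose s hs f hf hfs using hacc
  -- cross acceptance
  have cross : ∀ i j : Fin n, s i = s j → x i ++ y j ∈ A.accepts := by
    intro i j hij
    rw [NFA.mem_accepts]
    refine ⟨f j, hf j, ?_⟩
    rw [NFA.evalFrom_append']
    have : ({s j} : Set σ) ⊆ A.evalFrom A.start (x i) := by
      intro u hu; rw [Set.mem_singleton_iff] at hu; subst hu; exact hij ▸ hs i
    exact A.evalFrom_mono this (y j) (hfs j)
  have hinj : Function.Injective s := by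
    intro i j hij
    by_contra hne
    have h1 : (x i ++ y i).length ≤ l := hlen _ (hin i)
    have h2 : (x j ++ y j).length ≤ l := hlen _ (hin j)
    simp only [List.length_append] at h1 h2
    rcases le_or_gt ((x i ++ y j).length) l with hle | hlt
    · exact hout i j hne hle ((hA _ hle).1 (cross i j hij))
    · have hle' : (x j ++ y i).length ≤ l := by
        simp only [List.length_append] at hlt ⊢; omega
      exact hout j i (Ne.symm hne) hle' ((hA _ hle').1 (cross j i hij.symm))
  calc n = Fintype.card (Fin n) := (Fintype.card_fin n).symm
    _ ≤ Fintype.card σ := Fintype.card_le_of_injective s hinj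
end

section
/- The set S = {(b^m a b^j, b^{n-2-j}) : 0 ≤ j ≤ n-2} ∪ {(ε, b^m a b^{n-2})} is an extended fooling set (in the cover-automaton sense) for L = {a,b}^{≤m} a {a,b}^{n-2}, hence every NFA cover automaton for L has at least n states. -/
/-- The language `{a,b}^{≤m} a {a,b}^{n-2}` over `Bool` (`true` = a, `false` = b). -/
def Lmn (m n : ℕ) : Language Bool :=
  {w | ∃ u v : List Bool, w = u ++ [true] ++ v ∧ u.length ≤ m ∧ v.length = n - 2}

/-- Left components of the fooling set `S`:
`b^m a b^j` for `0 ≤ j ≤ n-2`, and `ε` for the last index. -/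
def xS (m n : ℕ) (i : Fin n) : List Bool :=
  if (i : ℕ) ≤ n - 2 then
    List.replicate m false ++ [true] ++ List.replicate (i : ℕ) false
  else []

/-- Right components of the fooling set `S`:
`b^{n-2-j}` for `0 ≤ j ≤ n-2`, and `b^m a b^{n-2}` for the last index. -/
def yS (m n : ℕ) (i : Fin n) : List Bool :=
  if (i : ℕ) ≤ n - 2 then List.replicate (n - 2 - (i : ℕ)) false
  else List.replicate m false ++ [true] ++ List.replicate (n - 2) false

namespace NFA

variable {α σ : Type*} (M : NFA α σ)

theorem append_mem_accepts_iff {x y : List α} :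
    x ++ y ∈ M.accepts ↔ ∃ t ∈ M.evalFrom M.start x, y ∈ M.acceptsFrom {t} := by
  simp_rw [mem_accepts, evalFrom_append, mem_acceptsFrom,
    mem_evalFrom_iff_exists (S := M.evalFrom _ x)]
  constructor <;> rintro ⟨s, hs, t, ht, hst⟩ <;> exact ⟨t, ht, s, hs, hst⟩

end NFA

def IsExtendedFoolingSet {α ι : Type*} (L : Language α) (l : ℕ) (x y : ι → List α) : Prop :=
  (∀ i, x i ++ y i ∈ L) ∧
    ∀ i j, i ≠ j →
      ((x i ++ y j).length ≤ l ∧ x i ++ y j ∉ L) ∨ ((x j ++ y i).length ≤ l ∧ x j ++ y i ∉ L)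

theorem IsExtendedFoolingSet.card_le {α σ ι : Type*} [Fintype σ] [Fintype ι] {L : Language α}
    {l : ℕ} {x y : ι → List α} (hS : IsExtendedFoolingSet L l x y)
    (hL : ∀ w ∈ L, w.length ≤ l) {M : NFA α σ} (hM : IsCoverN M L l) :
    Fintype.card ι ≤ Fintype.card σ := by
  have hacc i : x i ++ y i ∈ M.accepts := (hM _ (hL _ (hS.1 i))).2 (hS.1 i)
  choose f hfx hfy using fun i => (M.append_mem_accepts_iff).1 (hacc i)
  have hcross {i j} (hij : f i = f j) : x i ++ y j ∈ M.accepts :=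
    M.append_mem_accepts_iff.2 ⟨f i, hfx i, hij ▸ hfy j⟩
  refine Fintype.card_le_of_injective f fun i j hij => ?_
  by_contra hne
  rcases hS.2 i j hne with ⟨hlen, hnot⟩ | ⟨hlen, hnot⟩
  · exact hnot ((hM _ hlen).1 (hcross hij))
  · exact hnot ((hM _ hlen).1 (hcross hij.symm))

section Lmn

open List

variable {m n : ℕ}

theorem length_le_of_mem_Lmn (hn : 2 ≤ n) {w : List Bool} (hw : w ∈ Lmn m n) :
    w.length ≤ m + n - 1 := by
  obtain ⟨u, v, rfl, hu, hv⟩ := hw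
  simp only [length_append, length_singleton]
  omega

theorem replicate_false_not_mem_Lmn (k : ℕ) : replicate k false ∉ Lmn m n := by
  rintro ⟨u, v, h, -, -⟩
  simpa using congrArg (true ∈ ·) h

theorem replicate_append_cons_mem_Lmn_iff {p q : ℕ} :
    replicate p false ++ true :: replicate q false ∈ Lmn m n ↔ p ≤ m ∧ q = n - 2 := by
  constructor
  · rintro ⟨u, v, h, hu, hv⟩
    rw [append_assoc, singleton_append] at h
    obtain ⟨rfl, -, rfl⟩ := (append_cons_inj_of_notMem (by simp) (by simp)).1 h
    simpa using And.intro hu hv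
  · rintro ⟨hp, rfl⟩
    exact ⟨replicate p false, replicate (n - 2) false, by simp, by simpa using hp, by simp⟩

theorem xS_append_yS_of_le {i j : Fin n} (hi : (i : ℕ) ≤ n - 2) (hj : (j : ℕ) ≤ n - 2) :
    xS m n i ++ yS m n j = replicate m false ++ true :: replicate (i + (n - 2 - j)) false := by
  simp [xS, yS, hi, hj, ← replicate_append_replicate]

theorem xS_eq_nil {i : Fin n} (hi : n - 2 < (i : ℕ)) : xS m n i = [] := by
  simp [xS, hi.not_ge]

theorem xS_append_yS_short_not_mem_Lmn {i j : Fin n} (hj : (j : ℕ) ≤ n - 2)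
    (hi : (i : ℕ) < j ∨ n - 2 < i) :
    (xS m n i ++ yS m n j).length ≤ m + n - 1 ∧ xS m n i ++ yS m n j ∉ Lmn m n := by
  rcases hi with hij | hi
  · rw [xS_append_yS_of_le (by omega) hj, replicate_append_cons_mem_Lmn_iff]
    simp only [length_append, length_replicate, length_cons]
    omega
  · rw [xS_eq_nil hi, nil_append, yS, if_pos hj]
    exact ⟨by simp; omega, replicate_false_not_mem_Lmn _⟩

theorem isExtendedFoolingSet_Lmn :
    IsExtendedFoolingSet (Lmn m n) (m + n - 1) (xS m n) (yS m n) := by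
  refine ⟨fun i => ?_, fun i j hij => ?_⟩
  · by_cases hi : (i : ℕ) ≤ n - 2
    · rw [xS_append_yS_of_le hi hi, replicate_append_cons_mem_Lmn_iff]
      omega
    · rw [xS_eq_nil (by omega), nil_append, yS, if_neg hi]
      exact ⟨_, _, rfl, by simp, by simp⟩
  · have hij' : (i : ℕ) ≠ j := Fin.val_ne_of_ne hij
    by_cases hleft : (j : ℕ) ≤ n - 2 ∧ ((i : ℕ) < j ∨ n - 2 < i)
    · exact .inl (xS_append_yS_short_not_mem_Lmn hleft.1 hleft.2)
    · exact .inr (xS_append_yS_short_not_mem_Lmn (by omega) (by omega))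

end Lmn

theorem extended_fooling_set_Lmn_general (m n : ℕ) (hn : 2 ≤ n) :
    (∀ i : Fin n, xS m n i ++ yS m n i ∈ Lmn m n) ∧
    (∀ i j : Fin n, i ≠ j →
      ((xS m n i ++ yS m n j).length ≤ m + n - 1 ∧ xS m n i ++ yS m n j ∉ Lmn m n) ∨
      ((xS m n j ++ yS m n i).length ≤ m + n - 1 ∧ xS m n j ++ yS m n i ∉ Lmn m n)) ∧
    (∀ (σ : Type) [Fintype σ] (A : NFA Bool σ),
      IsCoverN A (Lmn m n) (m + n - 1) → n ≤ Fintype.card σ) := by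
  have hS := isExtendedFoolingSet_Lmn (m := m) (n := n)
  refine ⟨hS.1, hS.2, fun σ _ A hA => ?_⟩
  simpa using hS.card_le (fun w => length_le_of_mem_Lmn hn) hA

/-- `S = {(b^m a b^j, b^{n-2-j}) : 0 ≤ j ≤ n-2} ∪ {(ε, b^m a b^{n-2})}`
is an extended fooling set in the cover-automaton sense for
`L = {a,b}^{≤m} a {a,b}^{n-2}` (with `l = m+n-1`), hence every NFA cover
automaton for `L` has at least `n` states. -/
theorem extended_fooling_set_Lmn (m n : ℕ) (hm : 1 ≤ m) (hn : 2 ≤ n) :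
    (∀ i : Fin n, xS m n i ++ yS m n i ∈ Lmn m n) ∧
    (∀ i j : Fin n, i ≠ j →
      ((xS m n i ++ yS m n j).length ≤ m + n - 1 ∧ xS m n i ++ yS m n j ∉ Lmn m n) ∨
      ((xS m n j ++ yS m n i).length ≤ m + n - 1 ∧ xS m n j ++ yS m n i ∉ Lmn m n)) ∧
    (∀ (σ : Type) [Fintype σ] (A : NFA Bool σ),
      IsCoverN A (Lmn m n) (m + n - 1) → n ≤ Fintype.card σ) :=
  extended_fooling_set_Lmn_general m n hn
end

section
/- In an NFA cover automaton A for a finite language L with maximal word length l, if p ∼_A q (states p and q are similar) and level(p) ≤ level(q) ≤ l, then strongly merging q into p (redirecting all transitions entering q to enter p instead, and deleting q and its outgoing transitions) yields an NFA A' that is still a cover automaton for L. -/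
/-- The level of a state: the length of a shortest word reaching it
(`⊤` if it is unreachable). -/
noncomputable def nfaLevel {α σ : Type*} (A : NFA α σ) (s : σ) : ℕ∞ :=
  ⨅ w ∈ {w : List α | s ∈ A.eval w}, (w.length : ℕ∞)

/-- Acceptance of a word starting from the single state `s`. -/
def AccFrom {α σ : Type*} (A : NFA α σ) (s : σ) (w : List α) : Prop :=
  ∃ f ∈ A.evalFrom {s} w, f ∈ A.accept

/-- Similarity of states `p ∼_A q` in a cover automaton with length bound `l`:
acceptance from `p` and from `q` agree on all words of length at most
`l - max(level(p), level(q))`. -/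
def StateSim {α σ : Type*} (A : NFA α σ) (l : ℕ) (p q : σ) : Prop :=
  ∀ w : List α,
    (w.length : ℕ∞) ≤ (l : ℕ∞) - max (nfaLevel A p) (nfaLevel A q) →
    (AccFrom A p w ↔ AccFrom A q w)

/-- Strong merge of state `q` into state `p`: transitions entering `q` are
redirected to `p`, and `q` (with its outgoing transitions) is deleted. -/
def strongMerge {α σ : Type*} (A : NFA α σ) (p q : σ) : NFA α {s : σ // s ≠ q} where
  step := fun s a => {t | (t : σ) ∈ A.step s.1 a ∨ ((t : σ) = p ∧ q ∈ A.step s.1 a)}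
  start := {s | (s : σ) ∈ A.start ∨ ((s : σ) = p ∧ q ∈ A.start)}
  accept := {s | (s : σ) ∈ A.accept}

/-- Weak merge of state `q` into state `p`: `q` is collapsed onto `p`,
consolidating both its incoming and its outgoing transitions. -/
def weakMerge {α σ : Type*} [DecidableEq σ] (A : NFA α σ) (p q : σ) :
    NFA α {s : σ // s ≠ q} where
  step := fun s a =>
    if (s : σ) = p then
      {t | (t : σ) ∈ A.step p a ∨ (t : σ) ∈ A.step q a ∨
        ((t : σ) = p ∧ (q ∈ A.step p a ∨ q ∈ A.step q a))}
    else
      {t | (t : σ) ∈ A.step s.1 a ∨ ((t : σ) = p ∧ q ∈ A.step s.1 a)}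
  start := {s | (s : σ) ∈ A.start ∨ ((s : σ) = p ∧ q ∈ A.start)}
  accept := {s | (s : σ) ∈ A.accept}

namespace NFA

variable {α σ : Type*} (A : NFA α σ)

theorem mem_acceptsFrom_iff_exists {S : Set σ} {w : List α} :
    w ∈ A.acceptsFrom S ↔ ∃ s ∈ S, w ∈ A.acceptsFrom {s} := by
  simp only [mem_acceptsFrom, mem_evalFrom_iff_exists (S := S)]
  grind

theorem cons_mem_acceptsFrom_singleton {s : σ} {a : α} {w : List α} :
    a :: w ∈ A.acceptsFrom {s} ↔ w ∈ A.acceptsFrom (A.step s a) := by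
  rw [cons_mem_acceptsFrom, stepSet_singleton]

end NFA

section StrongMerge

variable {α σ : Type*} (A : NFA α σ)

theorem accFrom_iff_mem_acceptsFrom {s : σ} {w : List α} :
    AccFrom A s w ↔ w ∈ A.acceptsFrom {s} :=
  exists_congr fun _ ↦ and_comm

theorem nfaLevel_le_of_mem_eval {s : σ} {w : List α} (h : s ∈ A.eval w) :
    nfaLevel A s ≤ w.length :=
  iInf₂_le w h

theorem nfaLevel_eq_zero_of_mem_start {s : σ} (h : s ∈ A.start) : nfaLevel A s = 0 :=
  nonpos_iff_eq_zero.1 (nfaLevel_le_of_mem_eval A (w := []) h)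

theorem nfaLevel_le_add_one_of_mem_step {s t : σ} {a : α} (h : t ∈ A.step s a) :
    nfaLevel A t ≤ nfaLevel A s + 1 := by
  refine tsub_le_iff_right.1 (le_iInf₂ fun w hw ↦ tsub_le_iff_right.2 ?_)
  have ht : t ∈ A.eval (w ++ [a]) := by
    rw [NFA.eval_append_singleton, NFA.mem_stepSet]
    exact ⟨s, hw, h⟩
  simpa using nfaLevel_le_of_mem_eval A ht

variable {A} {l : ℕ} {p q : σ}

theorem StateSim.mem_acceptsFrom_iff (hsim : StateSim A l p q)
    (hlev : nfaLevel A p ≤ nfaLevel A q) {v : List α} (hv : nfaLevel A q + v.length ≤ l) :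
    v ∈ A.acceptsFrom {p} ↔ v ∈ A.acceptsFrom {q} := by
  have hq : nfaLevel A q ≠ ⊤ :=
    ne_top_of_le_ne_top (ENat.natCast_ne_top l) (le_of_add_le_left hv)
  simpa only [accFrom_iff_mem_acceptsFrom] using
    hsim v (by rw [max_eq_right hlev]; exact ENat.le_sub_of_add_le_left hq hv)

/-- Both the start set and each step set of `strongMerge A p q` are obtained from those of `A`
by this redirection. -/
theorem strongMerge_mem_acceptsFrom_redirect_iff (hpq : p ≠ q) (hsim : StateSim A l p q)
    (hlev : nfaLevel A p ≤ nfaLevel A q) {S : Set σ} {v : List α}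
    (hS : ∀ t ∈ S, nfaLevel A t + v.length ≤ l)
    (ih : ∀ t (ht : t ≠ q), nfaLevel A t + v.length ≤ l →
      (v ∈ (strongMerge A p q).acceptsFrom {⟨t, ht⟩} ↔ v ∈ A.acceptsFrom {t})) :
    v ∈ (strongMerge A p q).acceptsFrom {t | (t : σ) ∈ S ∨ ((t : σ) = p ∧ q ∈ S)} ↔
      v ∈ A.acceptsFrom S := by
  have hq (hqS : q ∈ S) : v ∈ (strongMerge A p q).acceptsFrom {⟨p, hpq⟩} ↔
      v ∈ A.acceptsFrom {q} :=
    (ih p hpq ((add_le_add_left hlev _).trans (hS q hqS))).trans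
      (hsim.mem_acceptsFrom_iff hlev (hS q hqS))
  rw [NFA.mem_acceptsFrom_iff_exists, NFA.mem_acceptsFrom_iff_exists]
  constructor
  · rintro ⟨t, ht | ⟨rfl, hqS⟩, hv⟩
    · exact ⟨t, ht, (ih t t.2 (hS t ht)).1 hv⟩
    · exact ⟨q, hqS, (hq hqS).1 hv⟩
  · rintro ⟨t, ht, hv⟩
    by_cases htq : t = q
    · subst htq
      exact ⟨⟨p, hpq⟩, Or.inr ⟨rfl, ht⟩, (hq ht).2 hv⟩
    · exact ⟨⟨t, htq⟩, Or.inl ht, (ih t htq (hS t ht)).2 hv⟩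

theorem strongMerge_mem_acceptsFrom_singleton_iff (hpq : p ≠ q) (hsim : StateSim A l p q)
    (hlev : nfaLevel A p ≤ nfaLevel A q) (v : List α) (s : σ) (hs : s ≠ q)
    (hsv : nfaLevel A s + v.length ≤ l) :
    v ∈ (strongMerge A p q).acceptsFrom {⟨s, hs⟩} ↔ v ∈ A.acceptsFrom {s} := by
  induction v generalizing s with
  | nil => simp [strongMerge]
  | cons a v ih =>
    rw [NFA.cons_mem_acceptsFrom_singleton, NFA.cons_mem_acceptsFrom_singleton]
    refine strongMerge_mem_acceptsFrom_redirect_iff hpq hsim hlev (fun t ht ↦ ?_) ih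
    calc nfaLevel A t + v.length ≤ nfaLevel A s + 1 + v.length := by
          gcongr; exact nfaLevel_le_add_one_of_mem_step A ht
      _ = nfaLevel A s + (a :: v).length := by push_cast [List.length_cons]; ring
      _ ≤ l := hsv

end StrongMerge

theorem strongMerge_is_cover_general {α σ : Type*} (A : NFA α σ) (L : Language α) (l : ℕ)
    (hA : IsCoverN A L l) (p q : σ) (hpq : p ≠ q)
    (hsim : StateSim A l p q)
    (hlev : nfaLevel A p ≤ nfaLevel A q) :
    IsCoverN (strongMerge A p q) L l := by
  intro w hw
  have hstart : ∀ s ∈ A.start, nfaLevel A s + w.length ≤ l := fun s hs ↦ by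
    rw [nfaLevel_eq_zero_of_mem_start A hs, zero_add]
    exact_mod_cast hw
  have hmerge : w ∈ (strongMerge A p q).accepts ↔ w ∈ A.accepts :=
    strongMerge_mem_acceptsFrom_redirect_iff hpq hsim hlev hstart
      (strongMerge_mem_acceptsFrom_singleton_iff hpq hsim hlev w)
  exact hmerge.trans (hA w hw)

/-- if `p ∼_A q` in an NFA cover automaton `A` for `L` and
`level(p) ≤ level(q) ≤ l`, then strongly merging `q` into `p` yields an NFA
that is still a cover automaton for `L`. -/
theorem strongMerge_is_cover {α σ : Type*} (A : NFA α σ) (L : Language α) (l : ℕ)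
    (hA : IsCoverN A L l) (p q : σ) (hpq : p ≠ q)
    (hsim : StateSim A l p q)
    (hlev : nfaLevel A p ≤ nfaLevel A q)
    (hql : nfaLevel A q ≤ (l : ℕ∞)) :
    IsCoverN (strongMerge A p q) L l :=
  strongMerge_is_cover_general A L l hA p q hpq hsim hlev
end

section
/- There exists an NFA cover automaton A for a finite language L and states p ≠ q with level(p), level(q) ≤ l such that x_A(p) ∼_L x_A(q) (the minimal words reaching p and q are similar w.r.t. L) but merging p and q (in either the weak or strong sense) does not preserve the cover property. -/
/-- Similarity of words with respect to `L` with length bound `l`. -/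
def WordSim {α : Type*} (L : Language α) (l : ℕ) (x y : List α) : Prop :=
  ∀ w : List α, w.length ≤ l - max x.length y.length → ((x ++ w) ∈ L ↔ (y ++ w) ∈ L)

namespace Finset

variable {σ : Type*} [Fintype σ]

def relImage (R : σ → σ → Prop) [DecidableRel R] (S : Finset σ) : Finset σ :=
  {t | ∃ s ∈ S, R s t}

end Finset

namespace NFA

variable {α σ : Type*}

/-- Descriptions of the `a`-transitions, start and accepting states of `M` by predicates that can
be chosen decidable, so that runs of `M` on powers of `a` can be evaluated by `decide`. -/
structure PresentedBy (M : NFA α σ) (a : α) (R : σ → σ → Prop) (I F : σ → Prop) : Prop where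
  mem_step_iff : ∀ s t, t ∈ M.step s a ↔ R s t
  mem_start_iff : ∀ s, s ∈ M.start ↔ I s
  mem_accept_iff : ∀ s, s ∈ M.accept ↔ F s

namespace PresentedBy

variable {A : NFA α σ} {a : α} {R : σ → σ → Prop} {I F : σ → Prop}

theorem strongMerge (h : A.PresentedBy a R I F) (p q : σ) :
    (strongMerge A p q).PresentedBy a (fun s t => R s t ∨ (t.1 = p ∧ R s q))
      (fun s => I s ∨ (s.1 = p ∧ I q)) (fun s => F s) where
  mem_step_iff s t := by simp [_root_.strongMerge, h.mem_step_iff]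
  mem_start_iff s := by simp [_root_.strongMerge, h.mem_start_iff]
  mem_accept_iff s := h.mem_accept_iff s

theorem weakMerge [DecidableEq σ] (h : A.PresentedBy a R I F) (p q : σ) :
    (weakMerge A p q).PresentedBy a
      (fun s t => if s.1 = p then R p t ∨ R q t ∨ (t.1 = p ∧ (R p q ∨ R q q))
        else R s t ∨ (t.1 = p ∧ R s q))
      (fun s => I s ∨ (s.1 = p ∧ I q)) (fun s => F s) where
  mem_step_iff s t := by
    by_cases hs : s.1 = p <;> simp [_root_.weakMerge, hs, h.mem_step_iff]
  mem_start_iff s := by simp [_root_.weakMerge, h.mem_start_iff]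
  mem_accept_iff s := h.mem_accept_iff s

variable [Fintype σ] [DecidableRel R]

theorem stepSet_coe (h : A.PresentedBy a R I F) (S : Finset σ) :
    A.stepSet S a = ↑(S.relImage R) := by
  ext t
  simp [mem_stepSet, h.mem_step_iff, Finset.relImage]

variable [DecidablePred I]

theorem eval_replicate (h : A.PresentedBy a R I F) (n : ℕ) :
    A.eval (List.replicate n a) = ↑((Finset.relImage R)^[n] {s | I s}) := by
  induction n with
  | zero => ext; simp [h.mem_start_iff]
  | succ n ih =>
    rw [List.replicate_succ', eval_append_singleton, ih, h.stepSet_coe,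
      Function.iterate_succ_apply']

theorem replicate_mem_accepts_iff (h : A.PresentedBy a R I F) (n : ℕ) :
    List.replicate n a ∈ A.accepts ↔ ∃ t ∈ (Finset.relImage R)^[n] {s | I s}, F t := by
  change (∃ t ∈ A.accept, t ∈ A.eval _) ↔ _
  simp [h.eval_replicate, h.mem_accept_iff, and_comm]

end PresentedBy

end NFA
section CoverAutomata

variable {α σ τ : Type*}

def NFA.acceptsUpTo (A : NFA α σ) (l : ℕ) : Language α :=
  {w | w ∈ A.accepts ∧ w.length ≤ l}

theorem NFA.acceptsUpTo_finite [Finite α] (A : NFA α σ) (l : ℕ) :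
    (A.acceptsUpTo l : Set (List α)).Finite :=
  (List.finite_length_le α l).subset fun _ => And.right

theorem isCoverN_acceptsUpTo (A : NFA α σ) (l : ℕ) : IsCoverN A (A.acceptsUpTo l) l :=
  fun _ hw => ⟨fun h => ⟨h, hw⟩, And.left⟩

theorem not_isCoverN_acceptsUpTo {A : NFA α σ} {B : NFA α τ} {l : ℕ} {w : List α}
    (hw : w.length ≤ l) (h : ¬(w ∈ B.accepts ↔ w ∈ A.accepts)) :
    ¬IsCoverN B (A.acceptsUpTo l) l :=
  fun hB => h <| (hB w hw).trans ⟨And.left, fun hA => ⟨hA, hw⟩⟩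

theorem NFA.PresentedBy.not_isCoverN_acceptsUpTo [Fintype σ] [Fintype τ] {A : NFA α σ}
    {B : NFA α τ} {a : α} {R : σ → σ → Prop} {I F : σ → Prop} {R' : τ → τ → Prop}
    {I' F' : τ → Prop} [DecidableRel R] [DecidablePred I] [DecidableRel R'] [DecidablePred I']
    (hB : B.PresentedBy a R' I' F') (hA : A.PresentedBy a R I F) {l n : ℕ} (hn : n ≤ l)
    (h : ¬((∃ t ∈ (Finset.relImage R')^[n] {s | I' s}, F' t) ↔
      ∃ t ∈ (Finset.relImage R)^[n] {s | I s}, F t)) :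
    ¬IsCoverN B (A.acceptsUpTo l) l :=
  _root_.not_isCoverN_acceptsUpTo (w := List.replicate n a) (by simpa using hn) <| by
    rwa [hB.replicate_mem_accepts_iff, hA.replicate_mem_accepts_iff]

theorem nfaLevel_le_length {A : NFA α σ} {s : σ} {w : List α} (h : s ∈ A.eval w) :
    nfaLevel A s ≤ w.length :=
  iInf₂_le w h

theorem nfaLevel_eq_one {A : NFA α σ} {s : σ} {a : α} (hs : s ∉ A.start)
    (h : s ∈ A.eval [a]) : nfaLevel A s = 1 :=
  (nfaLevel_le_length h).antisymm <| le_iInf₂ fun w hw => by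
    cases w with
    | nil => exact absurd hw hs
    | cons b w => simp

end CoverAutomata

def cyclesSucc : Fin 6 → Finset (Fin 6) := ![{1, 3}, {2}, {1}, {4}, {5}, {3}]

def cyclesNFA : NFA Unit (Fin 6) where
  step s _ := ↑(cyclesSucc s)
  start := {0}
  accept := {2, 4, 5}

theorem cyclesNFA_presentedBy :
    cyclesNFA.PresentedBy () (fun s t => t ∈ cyclesSucc s) (· = 0)
      (· ∈ ({2, 4, 5} : Finset (Fin 6))) where
  mem_step_iff _ _ := Iff.rfl
  mem_start_iff _ := Iff.rfl
  mem_accept_iff _ := by simp [cyclesNFA]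

theorem mem_cyclesNFA_eval_singleton {s : Fin 6} (hs : s ∈ cyclesSucc 0) :
    s ∈ cyclesNFA.eval [()] :=
  NFA.mem_stepSet.2 ⟨0, rfl, hs⟩

theorem nfaLevel_cyclesNFA {s : Fin 6} (hs : s ∈ cyclesSucc 0) : nfaLevel cyclesNFA s = 1 :=
  nfaLevel_eq_one (by rintro rfl; exact absurd hs (by decide)) (mem_cyclesNFA_eval_singleton hs)

/-- there exist an NFA cover automaton `A` for a finite language `L`
and distinct states `p, q` with `level(p), level(q) ≤ l` such that the minimal
words `x_A(p)` and `x_A(q)` reaching them are similar w.r.t. `L`, yet merging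
`p` and `q` (weakly or strongly, in either direction) destroys the cover property.
(Witness: the unary 6-state NFCA for `L_{9,7}` of Figure 5.) -/
theorem similar_minimal_words_not_mergible :
    ∃ (A : NFA Unit (Fin 6)) (L : Language Unit) (l : ℕ) (p q : Fin 6)
      (x y : List Unit),
      Set.Finite (L : Set (List Unit)) ∧ (∀ w ∈ L, List.length w ≤ l) ∧
      IsCoverN A L l ∧ p ≠ q ∧
      nfaLevel A p ≤ (l : ℕ∞) ∧ nfaLevel A q ≤ (l : ℕ∞) ∧
      p ∈ A.eval x ∧ (x.length : ℕ∞) = nfaLevel A p ∧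
      q ∈ A.eval y ∧ (y.length : ℕ∞) = nfaLevel A q ∧
      WordSim L l x y ∧
      ¬ IsCoverN (weakMerge A p q) L l ∧
      ¬ IsCoverN (strongMerge A p q) L l ∧
      ¬ IsCoverN (weakMerge A q p) L l ∧
      ¬ IsCoverN (strongMerge A q p) L l := by
  have hA := cyclesNFA_presentedBy
  have level₁ := nfaLevel_cyclesNFA (s := 1) (by decide)
  have level₃ := nfaLevel_cyclesNFA (s := 3) (by decide)
  refine ⟨cyclesNFA, cyclesNFA.acceptsUpTo 10, 10, 1, 3, [()], [()],
    cyclesNFA.acceptsUpTo_finite 10, fun _ hw => hw.2, isCoverN_acceptsUpTo cyclesNFA 10,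
    by decide, by simp [level₁], by simp [level₃],
    mem_cyclesNFA_eval_singleton (by decide), by simp [level₁],
    mem_cyclesNFA_eval_singleton (by decide), by simp [level₃],
    fun _ _ => Iff.rfl, ?_, ?_, ?_, ?_⟩
  · exact (hA.weakMerge 1 3).not_isCoverN_acceptsUpTo hA (n := 7) (by norm_num) (by decide)
  · exact (hA.strongMerge 1 3).not_isCoverN_acceptsUpTo hA (n := 3) (by norm_num) (by decide)
  · exact (hA.weakMerge 3 1).not_isCoverN_acceptsUpTo hA (n := 7) (by norm_num) (by decide)
  · exact (hA.strongMerge 3 1).not_isCoverN_acceptsUpTo hA (n := 4) (by norm_num) (by decide)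
end

section
/- Any extended fooling set for the unary language L_{l,k} = a·(Σ^{≤l} ∖ {a^{kn} : n ≥ 0}) in which all left components have length greater than 1 has size at most 3; in particular the extended fooling set technique cannot certify the true lower bound k for ncsc(L_{l,k}) when k > c for a suitable constant c. -/
/-- Auxiliary: for `1 ≤ s`, divisibility `k ∣ s - 1` is congruence to `1` in `ZMod k`. -/
lemma dvd_sub_one_iff_cast (k s : ℕ) [NeZero k] (h1 : 1 ≤ s) :
    k ∣ (s - 1) ↔ ((s : ZMod k) = 1) := by
  rw [← ZMod.natCast_eq_zero_iff, Nat.cast_sub h1, sub_eq_zero, Nat.cast_one]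

/-- Membership of `a^i` in the unary language `L_{l,k} = {a^{m+1} : m ≤ l, k ∤ m}`,
expressed on the exponent `i`. -/
def inLlk (l k i : ℕ) : Prop := 1 ≤ i ∧ i ≤ l + 1 ∧ ¬ (k ∣ (i - 1))

/-- any extended fooling set (in the cover-automaton sense, with
length bound the longest word of `L_{l,k}`) for the unary language `L_{l,k}`
in which all left components have length greater than `1` has size at most `3`. -/
theorem extended_fooling_set_Lu_small (l k : ℕ) (hk : Nat.Prime k) (hl : k < l)
    (r : ℕ) (x y : Fin r → ℕ)
    (hx : ∀ t, 1 < x t)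
    (hin : ∀ t, inLlk l k (x t + y t))
    (hout : ∀ t u, t ≠ u →
      (x t + y u ≤ sSup {i | inLlk l k i} ∧ ¬ inLlk l k (x t + y u)) ∨
      (x u + y t ≤ sSup {i | inLlk l k i} ∧ ¬ inLlk l k (x u + y t))) :
    r ≤ 3 := by
  by_contra hr
  push_neg at hr
  haveI : NeZero k := ⟨hk.ne_zero⟩
  -- the longest word of the language has length at most `l + 1`
  have hS : sSup {i | inLlk l k i} ≤ l + 1 := by
    apply csSup_le
    · exact ⟨2, by norm_num, by omega, by simpa using hk.one_lt.ne'⟩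
    · intro b hb; exact hb.2.1
  -- the "edge" relation: `x t + y u ≡ 1 (mod k)`
  set Q : Fin r → Fin r → Prop := fun t u => ((x t : ZMod k) + (y u : ZMod k) = 1)
    with hQdef
  -- no loops: diagonal sums are in the language
  have hA : ∀ t, ¬ Q t t := by
    intro t h
    obtain ⟨h1, _, h3⟩ := hin t
    exact h3 ((dvd_sub_one_iff_cast k _ h1).mpr (by push_cast; simpa using h))
  -- failure of membership forces the congruence
  have hkey : ∀ t u, x t + y u ≤ sSup {i | inLlk l k i} → ¬ inLlk l k (x t + y u) →
      Q t u := by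
    intro t u hle hnot
    have h1 : 1 ≤ x t + y u := by have := hx t; omega
    have h2 : x t + y u ≤ l + 1 := le_trans hle hS
    have hdvd : k ∣ (x t + y u - 1) := by
      by_contra hd
      exact hnot ⟨h1, h2, hd⟩
    have := (dvd_sub_one_iff_cast k _ h1).mp hdvd
    simpa [hQdef] using this
  -- every pair of distinct indices carries at least one edge
  have hB : ∀ t u, t ≠ u → Q t u ∨ Q u t := by
    intro t u htu
    rcases hout t u htu with ⟨hle, hnot⟩ | ⟨hle, hnot⟩
    · exact Or.inl (hkey t u hle hnot)
    · exact Or.inr (hkey u t hle hnot)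
  -- key claim: no vertex has two distinct out-neighbours
  have hC : ∀ t u v, u ≠ v → Q t u → Q t v → False := by
    intro t u v huv h1 h2
    have hy : (y u : ZMod k) = (y v : ZMod k) := by
      have : (x t : ZMod k) + (y u : ZMod k) = (x t : ZMod k) + (y v : ZMod k) := by
        rw [h1, h2]
      exact add_left_cancel this
    rcases hB u v huv with h | h
    · exact hA u (by rw [hQdef] at h ⊢; rw [← hy] at h; exact h)
    · exact hA v (by rw [hQdef] at h ⊢; rw [hy] at h; exact h)
  -- four distinct indices
  have h0r : (0 : ℕ) < r := by omega
  have h1r : (1 : ℕ) < r := by omega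
  have h2r : (2 : ℕ) < r := by omega
  have h3r : (3 : ℕ) < r := by omega
  set a0 : Fin r := ⟨0, h0r⟩
  set a1 : Fin r := ⟨1, h1r⟩
  set a2 : Fin r := ⟨2, h2r⟩
  set a3 : Fin r := ⟨3, h3r⟩
  have n01 : a0 ≠ a1 := by simp [a0, a1, Fin.ext_iff]
  have n02 : a0 ≠ a2 := by simp [a0, a2, Fin.ext_iff]
  have n03 : a0 ≠ a3 := by simp [a0, a3, Fin.ext_iff]
  have n12 : a1 ≠ a2 := by simp [a1, a2, Fin.ext_iff]
  have n13 : a1 ≠ a3 := by simp [a1, a3, Fin.ext_iff]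
  have n23 : a2 ≠ a3 := by simp [a2, a3, Fin.ext_iff]
  rcases hB a0 a1 n01 with h01 | h10 <;>
    rcases hB a0 a2 n02 with h02 | h20 <;>
      rcases hB a0 a3 n03 with h03 | h30 <;>
        rcases hB a1 a2 n12 with h12 | h21 <;>
          rcases hB a1 a3 n13 with h13 | h31 <;>
            rcases hB a2 a3 n23 with h23 | h32 <;>
              first
                | exact hC a0 a1 a2 n12 h01 h02
                | exact hC a0 a1 a3 n13 h01 h03
                | exact hC a0 a2 a3 n23 h02 h03
                | exact hC a1 a0 a2 n02 h10 h12
                | exact hC a1 a0 a3 n03 h10 h13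
                | exact hC a1 a2 a3 n23 h12 h13
                | exact hC a2 a0 a1 n01 h20 h21
                | exact hC a2 a0 a3 n03 h20 h23
                | exact hC a2 a1 a3 n13 h21 h23
                | exact hC a3 a0 a1 n01 h30 h31
                | exact hC a3 a0 a2 n02 h30 h32
                | exact hC a3 a1 a2 n12 h31 h32
end
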